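/- Let f* be an optimal randomized prediction rule for the mutual-information-constrained fair classification problem: f* satisfies I(Ŷ; S) ≤ ε (mutual information in nats) and its risk E[1{Ŷ ≠ Y}] is minimal among all randomized prediction rules Q_{Ŷ|X,S} satisfying I(Ŷ; S) ≤ ε. Suppose Y = h(X, S) for a deterministic function h : 𝒳 × 𝒮 → 𝒴, and s_max ∈ 𝒮 satisfies P_S(s_max) = 1/2 + δ for some δ > 0. Then for the prediction variable Ŷ induced by f*: E_{s∼P_S}[ TV(P_{Ŷ|S=s}, P_{Y|S=s_max}) ] ≤ (1/2 + 1/(4δ)) · √(2ε). -/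

import Mathlib

/-!
By Pinsker's inequality and convexity of the square, the average distance `A` of the laws of `Ŷ`
given `S = s` from the law of `Ŷ` is at most `√(ε / 2)`. Since `Y = h(X, S)`, a rule may
transport, within each group, the label law of `Y | S = s` to that of `Y | S = s_max` by a
maximal coupling; it makes `Ŷ` independent of `S`, and its risk is at most
`E_s TV(P_{Y|S=s}, P_{Y|S=s_max})`. By optimality and the coupling inequality this bounds
`E_s TV(P_{Ŷ|S=s}, P_{Y|S=s})`, and the triangle inequality, with `s_max` carrying weight
`1/2 + δ`, turns this into `2δ · TV(P_Ŷ, P_{Y|S=s_max}) ≤ A`. The average distance to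
`P_{Y|S=s_max}` is at most `A + TV(P_Ŷ, P_{Y|S=s_max}) ≤ (1 + 1/(2δ)) A`.
-/

open Finset

noncomputable section

variable {𝒳 𝒴 𝒮 : Type*} [Fintype 𝒳] [Fintype 𝒴] [Fintype 𝒮] [DecidableEq 𝒴]

/-- Total variation distance between two finitely supported distributions on `𝒴`,
`TV(p, q) = (1/2) ∑ y, |p y - q y|`. -/
def TV (p q : 𝒴 → ℝ) : ℝ := (1 / 2) * ∑ y, |p y - q y|

/-- Marginal distribution of the sensitive attribute `S` under the joint `P` of `(X, Y, S)`. -/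
def margS (P : 𝒳 → 𝒴 → 𝒮 → ℝ) (s : 𝒮) : ℝ := ∑ x, ∑ y, P x y s

/-- Conditional distribution of the label `Y` given `S = s`. -/
def condYS (P : 𝒳 → 𝒴 → 𝒮 → ℝ) (s : 𝒮) (y : 𝒴) : ℝ := (∑ x, P x y s) / margS P s

/-- A randomized prediction rule `Q`: for every `(x, s)`, `Q x s` is a probability
distribution on labels. -/
def IsRule (Q : 𝒳 → 𝒮 → 𝒴 → ℝ) : Prop :=
  (∀ x s y, 0 ≤ Q x s y) ∧ ∀ x s, ∑ y, Q x s y = 1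

/-- The risk `E[1{Ŷ ≠ Y}]` of the rule `Q` under the joint distribution induced by `P` and
`Q` (in which `Ŷ` is conditionally independent of `Y` given `(X, S)`). -/
def risk (P : 𝒳 → 𝒴 → 𝒮 → ℝ) (Q : 𝒳 → 𝒮 → 𝒴 → ℝ) : ℝ :=
  ∑ x, ∑ y, ∑ s, ∑ yh, P x y s * Q x s yh * (if yh = y then (0 : ℝ) else 1)

/-- Joint distribution of `(Ŷ, S)` induced by `P` and the rule `Q`. -/
def jointYhatS (P : 𝒳 → 𝒴 → 𝒮 → ℝ) (Q : 𝒳 → 𝒮 → 𝒴 → ℝ) (yh : 𝒴) (s : 𝒮) : ℝ :=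
  ∑ x, ∑ y, P x y s * Q x s yh

/-- Marginal distribution of the prediction `Ŷ`. -/
def margYhat (P : 𝒳 → 𝒴 → 𝒮 → ℝ) (Q : 𝒳 → 𝒮 → 𝒴 → ℝ) (yh : 𝒴) : ℝ :=
  ∑ s, jointYhatS P Q yh s

/-- Conditional distribution of the prediction `Ŷ` given `S = s`. -/
def condYhatS (P : 𝒳 → 𝒴 → 𝒮 → ℝ) (Q : 𝒳 → 𝒮 → 𝒴 → ℝ) (s : 𝒮) (yh : 𝒴) : ℝ :=
  jointYhatS P Q yh s / margS P s

/-- Mutual information (in nats) between the prediction `Ŷ` and `S`: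
`I(Ŷ; S) = ∑_{y,s} P(Ŷ=y, S=s) ln( P(Ŷ=y, S=s) / (P(Ŷ=y) P(S=s)) )`. -/
def MI (P : 𝒳 → 𝒴 → 𝒮 → ℝ) (Q : 𝒳 → 𝒮 → 𝒴 → ℝ) : ℝ :=
  ∑ yh, ∑ s, jointYhatS P Q yh s *
    Real.log (jointYhatS P Q yh s / (margYhat P Q yh * margS P s))

open Real InformationTheory

theorem le_of_hasDerivAt_of_sub_mul_nonneg {f f' : ℝ → ℝ} {a b : ℝ}
    (hf : ∀ y ∈ Set.uIcc a b, HasDerivAt f (f' y) y)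
    (hf' : ∀ y ∈ Set.uIcc a b, 0 ≤ (y - a) * f' y) : f a ≤ f b := by
  have hcont : ContinuousOn f (Set.uIcc a b) := fun y hy ↦
    (hf y hy).continuousAt.continuousWithinAt
  rcases le_total a b with hab | hba
  · rw [Set.uIcc_of_le hab] at hf hf' hcont
    refine monotoneOn_of_hasDerivWithinAt_nonneg (convex_Icc a b) hcont
      (fun y hy ↦ (hf y (interior_subset hy)).hasDerivWithinAt) (fun y hy ↦ ?_)
      (Set.left_mem_Icc.2 hab) (Set.right_mem_Icc.2 hab) hab
    rw [interior_Icc] at hy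
    exact nonneg_of_mul_nonneg_right (hf' y (Set.Ioo_subset_Icc_self hy)) (sub_pos.2 hy.1)
  · rw [Set.uIcc_of_ge hba] at hf hf' hcont
    refine antitoneOn_of_hasDerivWithinAt_nonpos (convex_Icc b a) hcont
      (fun y hy ↦ (hf y (interior_subset hy)).hasDerivWithinAt) (fun y hy ↦ ?_)
      (Set.left_mem_Icc.2 hba) (Set.right_mem_Icc.2 hba) hba
    rw [interior_Icc] at hy
    exact nonpos_of_mul_nonneg_right (hf' y (Set.Ioo_subset_Icc_self hy)) (sub_neg.2 hy.2)

theorem monotoneOn_add_one_mul_log_sub :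
    MonotoneOn (fun x ↦ (x + 1) * log x - 2 * (x - 1)) (Set.Ioi 0) := by
  refine monotoneOn_of_hasDerivWithinAt_nonneg (f' := fun x ↦ log x + x⁻¹ - 1) (convex_Ioi 0)
    (fun x hx ↦ ?_) (fun x hx ↦ ?_) (fun x hx ↦ ?_)
  · exact (((continuousAt_id.add continuousAt_const).mul (continuousAt_log (ne_of_gt hx))).sub
      (continuousAt_const.mul (continuousAt_id.sub continuousAt_const))).continuousWithinAt
  · rw [interior_Ioi] at hx
    have hx0 : x ≠ 0 := ne_of_gt hx
    have := (((hasDerivAt_id' x).add_const 1).mul (hasDerivAt_log hx0)).sub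
      (((hasDerivAt_id' x).sub_const 1).const_mul 2)
    refine (this.congr_deriv ?_).hasDerivWithinAt
    field_simp
    ring
  · rw [interior_Ioi] at hx
    linarith [one_sub_inv_le_log_of_pos hx]

theorem sub_one_mul_add_one_mul_log_sub_nonneg {x : ℝ} (hx : 0 < x) :
    0 ≤ (x - 1) * ((x + 1) * log x - 2 * (x - 1)) := by
  have h := monotoneOn_add_one_mul_log_sub (a := 1) (b := x)
  have h' := monotoneOn_add_one_mul_log_sub (a := x) (b := 1)
  simp only [log_one, Set.mem_Ioi] at h h'
  rcases le_total 1 x with h1 | h1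
  · exact mul_nonneg (by linarith) (by linarith [h one_pos hx h1])
  · exact mul_nonneg_of_nonpos_of_nonpos (by linarith) (by linarith [h' hx one_pos h1])

theorem three_mul_sq_sub_one_le_klFun {x : ℝ} (hx : 0 ≤ x) :
    3 * (x - 1) ^ 2 ≤ 2 * (x + 2) * klFun x := by
  rcases hx.eq_or_lt with rfl | hx
  · norm_num [klFun_zero]
  set H : ℝ → ℝ := fun y ↦ 2 * (y + 2) * klFun y - 3 * (y - 1) ^ 2
  suffices H 1 ≤ H x by simpa [H, klFun_one] using this
  have hpos : ∀ y ∈ Set.uIcc 1 x, 0 < y := fun y hy ↦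
    lt_of_lt_of_le (lt_min one_pos hx) hy.1
  refine le_of_hasDerivAt_of_sub_mul_nonneg (f := H)
    (f' := fun y ↦ 4 * ((y + 1) * log y - 2 * (y - 1))) (fun y hy ↦ ?_) (fun y hy ↦ ?_)
  · have := ((((hasDerivAt_id' y).add_const 2).const_mul 2).mul
      (hasDerivAt_klFun (hpos y hy).ne')).sub
      ((((hasDerivAt_id' y).sub_const 1).pow 2).const_mul 3)
    refine this.congr_deriv ?_
    rw [klFun_apply]
    push_cast
    ring
  · have := sub_one_mul_add_one_mul_log_sub_nonneg (hpos y hy)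
    linarith

section Distributions

variable {α : Type*} [Fintype α]

theorem TV_comm (p q : α → ℝ) : TV p q = TV q p := by
  simp only [TV, abs_sub_comm]

@[simp]
theorem TV_self (p : α → ℝ) : TV p p = 0 := by
  simp [TV]

theorem TV_triangle (p q r : α → ℝ) : TV p r ≤ TV p q + TV q r := by
  unfold TV
  rw [← mul_add, ← Finset.sum_add_distrib]
  gcongr with a
  exact abs_sub_le (p a) (q a) (r a)

theorem mul_TV {c : ℝ} (hc : 0 ≤ c) (p q : α → ℝ) :
    c * TV p q = TV (fun a ↦ c * p a) (fun a ↦ c * q a) := by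
  simp only [TV, ← mul_sub, abs_mul, abs_of_nonneg hc, ← Finset.mul_sum]
  ring

theorem TV_eq_one_sub_sum_min {p q : α → ℝ} (hp : ∑ a, p a = 1) (hq : ∑ a, q a = 1) :
    TV p q = 1 - ∑ a, min (p a) (q a) := by
  have h : ∀ a, |p a - q a| = p a + q a - 2 * min (p a) (q a) := fun a ↦ by
    rcases le_total (p a) (q a) with hle | hle
    · rw [abs_of_nonpos (by linarith), min_eq_left hle]; ring
    · rw [abs_of_nonneg (by linarith), min_eq_right hle]; ring
  simp only [TV, h, Finset.sum_sub_distrib, Finset.sum_add_distrib, hp, hq, ← Finset.mul_sum]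
  ring

/-- The coupling inequality. -/
theorem TV_le_sum_sub_diag {γ : α → α → ℝ} (hγ : ∀ a b, 0 ≤ γ a b) :
    TV (fun a ↦ ∑ b, γ a b) (fun b ↦ ∑ a, γ a b) ≤ ∑ a, ((∑ b, γ a b) - γ a a) := by
  have hrow : ∀ a, γ a a ≤ ∑ b, γ a b := fun a ↦
    Finset.single_le_sum (fun b _ ↦ hγ a b) (Finset.mem_univ a)
  have hcol : ∀ b, γ b b ≤ ∑ a, γ a b := fun b ↦
    Finset.single_le_sum (fun a _ ↦ hγ a b) (Finset.mem_univ b)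
  have hmass : ∑ b, ((∑ a, γ a b) - γ b b) = ∑ a, ((∑ b, γ a b) - γ a a) := by
    simp only [Finset.sum_sub_distrib]
    rw [Finset.sum_comm]
  calc TV (fun a ↦ ∑ b, γ a b) (fun b ↦ ∑ a, γ a b)
      ≤ (1 / 2) * ∑ a, (((∑ b, γ a b) - γ a a) + ((∑ b, γ b a) - γ a a)) := by
        unfold TV
        gcongr with a
        rw [abs_le]
        constructor <;> linarith [hrow a, hcol a]
    _ = ∑ a, ((∑ b, γ a b) - γ a a) := by
        rw [Finset.sum_add_distrib, hmass]
        ring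

end Distributions

section KL

variable {α : Type*} [Fintype α]

def kl (p q : α → ℝ) : ℝ := ∑ a, p a * log (p a / q a)

theorem mul_klFun_div (p : ℝ) {r : ℝ} (hr : r ≠ 0) :
    r * klFun (p / r) = p * log (p / r) - p + r := by
  rw [klFun_apply]
  field_simp
  ring

theorem three_mul_sq_sub_le_mul_mul_klFun {p r : ℝ} (hp : 0 ≤ p) (hr : 0 < r) :
    3 * (p - r) ^ 2 ≤ 2 * (p + 2 * r) * (r * klFun (p / r)) := by
  have h := mul_le_mul_of_nonneg_left (three_mul_sq_sub_one_le_klFun (div_nonneg hp hr.le))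
    (sq_nonneg r)
  have e₁ : r ^ 2 * (3 * (p / r - 1) ^ 2) = 3 * (p - r) ^ 2 := by field_simp
  have e₂ : r ^ 2 * (2 * (p / r + 2) * klFun (p / r)) = 2 * (p + 2 * r) * (r * klFun (p / r)) := by
    field_simp
  rwa [e₁, e₂] at h

theorem kl_eq_sum_mul_klFun {p q : α → ℝ} (hp : ∑ a, p a = 1) (hq : ∑ a, q a = 1)
    (hpq : ∀ a, q a = 0 → p a = 0) : kl p q = ∑ a, q a * klFun (p a / q a) := by
  have h : ∀ a, q a * klFun (p a / q a) = p a * log (p a / q a) - p a + q a := fun a ↦ by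
    rcases eq_or_ne (q a) 0 with hqa | hqa
    · simp [hqa, hpq a hqa]
    · exact mul_klFun_div (p a) hqa
  simp only [h, Finset.sum_add_distrib, Finset.sum_sub_distrib, hp, hq, kl]
  ring

/-- **Pinsker's inequality**. -/
theorem two_mul_sq_TV_le_kl {p q : α → ℝ} (hp : p ∈ stdSimplex ℝ α) (hq : q ∈ stdSimplex ℝ α)
    (hpq : ∀ a, q a = 0 → p a = 0) : 2 * TV p q ^ 2 ≤ kl p q := by
  -- Cauchy–Schwarz against the weights `p + 2q`, of total mass 3.
  have hCS : (∑ a, |p a - q a|) ^ 2 ≤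
      (∑ a, 2 / 3 * (q a * klFun (p a / q a))) * ∑ a, (p a + 2 * q a) := by
    refine Finset.sum_sq_le_sum_mul_sum_of_sq_le_mul _ (fun a _ ↦ ?_) (fun a _ ↦ ?_)
      (fun a _ ↦ ?_)
    · exact mul_nonneg (by norm_num)
        (mul_nonneg (hq.1 a) (klFun_nonneg (div_nonneg (hp.1 a) (hq.1 a))))
    · linarith [hp.1 a, hq.1 a]
    · rcases (hq.1 a).eq_or_lt with hqa | hqa
      · simp [← hqa, hpq a hqa.symm]
      · rw [sq_abs]
        linarith [three_mul_sq_sub_le_mul_mul_klFun (hp.1 a) hqa]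
  rw [← Finset.mul_sum, Finset.sum_add_distrib, ← Finset.mul_sum, hp.2, hq.2,
    ← kl_eq_sum_mul_klFun hp.2 hq.2 hpq] at hCS
  unfold TV
  linarith

end KL

section Coupling

variable {α : Type*} [Fintype α]

theorem exists_residual_mem_stdSimplex {q m : α → ℝ} (hm : ∀ a, 0 ≤ m a)
    (hmq : ∀ a, m a ≤ q a) (hq : ∑ a, q a = 1) :
    ∃ r ∈ stdSimplex ℝ α, ∀ a, (1 - ∑ b, m b) * r a = q a - m a := by
  have hgap : ∑ a, (q a - m a) = 1 - ∑ b, m b := by rw [Finset.sum_sub_distrib, hq]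
  rcases eq_or_ne (1 - ∑ b, m b) 0 with h | h
  · have hqm := (Finset.sum_eq_zero_iff_of_nonneg fun a _ ↦ sub_nonneg.2 (hmq a)).1 (hgap.trans h)
    exact ⟨q, ⟨fun a ↦ (hm a).trans (hmq a), hq⟩, fun a ↦ by
      rw [h, zero_mul, hqm a (Finset.mem_univ a)]⟩
  · refine ⟨fun a ↦ (q a - m a) / (1 - ∑ b, m b), ⟨fun a ↦ ?_, ?_⟩, fun a ↦ mul_div_cancel₀ _ h⟩
    · have := hgap ▸ Finset.sum_nonneg fun a (_ : a ∈ Finset.univ) ↦ sub_nonneg.2 (hmq a)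
      exact div_nonneg (sub_nonneg.2 (hmq a)) this
    · rw [← Finset.sum_div, hgap, div_self h]

theorem exists_maximal_coupling_kernel {u q : α → ℝ} (hu : u ∈ stdSimplex ℝ α)
    (hq : q ∈ stdSimplex ℝ α) :
    ∃ K : α → α → ℝ, (∀ a, K a ∈ stdSimplex ℝ α) ∧ (∀ b, ∑ a, u a * K a b = q b) ∧
      ∑ a, u a * (1 - K a a) ≤ TV u q := by
  classical
  set m : α → ℝ := fun a ↦ min (u a) (q a)
  have hm0 : ∀ a, 0 ≤ m a := fun a ↦ le_min (hu.1 a) (hq.1 a)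
  have hmu : ∀ a, m a ≤ u a := fun a ↦ min_le_left _ _
  obtain ⟨r, hr, hrm⟩ := exists_residual_mem_stdSimplex hm0 (fun a ↦ min_le_right _ _) hq.2
  -- keep the fraction `m a / u a` of the mass at `a` in place, spread the rest along `r`
  -- (where `u a = 0`, the junk value `0 / 0 = 0` still makes `K a` a distribution)
  set θ : α → ℝ := fun a ↦ m a / u a with hθ
  have hθ0 : ∀ a, 0 ≤ θ a := fun a ↦ div_nonneg (hm0 a) (hu.1 a)
  have hθ1 : ∀ a, θ a ≤ 1 := fun a ↦ div_le_one_of_le₀ (hmu a) (hu.1 a)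
  have huθ : ∀ a, u a * θ a = m a := fun a ↦ by
    rcases (hu.1 a).eq_or_lt with h | h
    · have : m a = 0 := le_antisymm (h ▸ hmu a) (hm0 a)
      simp [hθ, this]
    · exact mul_div_cancel₀ _ h.ne'
  set K : α → α → ℝ := fun a b ↦ θ a * (if b = a then 1 else 0) + (1 - θ a) * r b with hK
  have huK : ∀ a b, u a * K a b = m a * (if b = a then 1 else 0) + (u a - m a) * r b :=
    fun a b ↦ by rw [← huθ a]; ring
  refine ⟨K, fun a ↦ ⟨fun b ↦ ?_, ?_⟩, fun b ↦ ?_, ?_⟩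
  · exact add_nonneg (mul_nonneg (hθ0 a) (by split_ifs <;> norm_num))
      (mul_nonneg (sub_nonneg.2 (hθ1 a)) (hr.1 b))
  · simp [hK, Finset.sum_add_distrib, ← Finset.mul_sum, hr.2]
  · simp only [huK, Finset.sum_add_distrib, mul_ite, mul_one, mul_zero, Finset.sum_ite_eq,
      Finset.mem_univ, if_true, ← Finset.sum_mul, Finset.sum_sub_distrib, hu.2, hrm]
    ring
  · calc ∑ a, u a * (1 - K a a) ≤ ∑ a, (u a - m a) := by
          gcongr with a
          have := huK a a
          rw [if_pos rfl, mul_one] at this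
          nlinarith [mul_nonneg (sub_nonneg.2 (hmu a)) (hr.1 a)]
      _ = TV u q := by rw [TV_eq_one_sub_sum_min hu.2 hq.2, Finset.sum_sub_distrib, hu.2]

end Coupling

section Model

omit [DecidableEq 𝒴]

variable {P : 𝒳 → 𝒴 → 𝒮 → ℝ} {Q : 𝒳 → 𝒮 → 𝒴 → ℝ}

section

omit [Fintype 𝒮]

theorem sum_eq_margS_mul_condYS (hS : ∀ s, 0 < margS P s) (y : 𝒴) (s : 𝒮) :
    ∑ x, P x y s = margS P s * condYS P s y :=
  (mul_div_cancel₀ _ (hS s).ne').symm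

theorem condYS_mem_stdSimplex (hP0 : ∀ x y s, 0 ≤ P x y s) (hS : ∀ s, 0 < margS P s)
    (s : 𝒮) : condYS P s ∈ stdSimplex ℝ 𝒴 := by
  refine ⟨fun y ↦ div_nonneg (Finset.sum_nonneg fun x _ ↦ hP0 x y s) (hS s).le, ?_⟩
  simp only [condYS]
  rw [← Finset.sum_div, Finset.sum_comm]
  exact div_self (hS s).ne'

theorem jointYhatS_eq_margS_mul_condYhatS (hS : ∀ s, 0 < margS P s) (y : 𝒴) (s : 𝒮) :
    jointYhatS P Q y s = margS P s * condYhatS P Q s y :=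
  (mul_div_cancel₀ _ (hS s).ne').symm

theorem jointYhatS_nonneg (hP0 : ∀ x y s, 0 ≤ P x y s) (hQ : IsRule Q) (y : 𝒴) (s : 𝒮) :
    0 ≤ jointYhatS P Q y s :=
  Finset.sum_nonneg fun x _ ↦ Finset.sum_nonneg fun _ _ ↦ mul_nonneg (hP0 _ _ _) (hQ.1 x s y)

theorem sum_jointYhatS (hQ : IsRule Q) (s : 𝒮) : ∑ y, jointYhatS P Q y s = margS P s := by
  simp only [jointYhatS, margS]
  rw [Finset.sum_comm]
  refine Finset.sum_congr rfl fun x _ ↦ ?_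
  rw [Finset.sum_comm]
  simp only [← Finset.mul_sum, hQ.2 x s, mul_one]

theorem condYhatS_mem_stdSimplex (hP0 : ∀ x y s, 0 ≤ P x y s) (hS : ∀ s, 0 < margS P s)
    (hQ : IsRule Q) (s : 𝒮) : condYhatS P Q s ∈ stdSimplex ℝ 𝒴 := by
  refine ⟨fun y ↦ div_nonneg (jointYhatS_nonneg hP0 hQ y s) (hS s).le, ?_⟩
  simp only [condYhatS]
  rw [← Finset.sum_div, sum_jointYhatS hQ, div_self (hS s).ne']

omit [Fintype 𝒴] in
theorem sum_mul_apply_label_eq {h : 𝒳 → 𝒮 → 𝒴} (hdet : ∀ x y s, y ≠ h x s → P x y s = 0)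
    (F : 𝒴 → ℝ) (y : 𝒴) (s : 𝒮) : ∑ x, P x y s * F (h x s) = (∑ x, P x y s) * F y := by
  rw [Finset.sum_mul]
  refine Finset.sum_congr rfl fun x _ ↦ ?_
  by_cases hy : y = h x s
  · rw [hy]
  · rw [hdet x y s hy, zero_mul, zero_mul]

end

theorem sum_margS (hP1 : ∑ x, ∑ y, ∑ s, P x y s = 1) : ∑ s, margS P s = 1 := by
  rw [← hP1, ← Finset.sum_congr rfl fun x _ ↦ Finset.sum_comm]
  exact Finset.sum_comm

theorem margYhat_mem_stdSimplex (hP0 : ∀ x y s, 0 ≤ P x y s)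
    (hP1 : ∑ x, ∑ y, ∑ s, P x y s = 1) (hQ : IsRule Q) : margYhat P Q ∈ stdSimplex ℝ 𝒴 := by
  refine ⟨fun y ↦ Finset.sum_nonneg fun s _ ↦ jointYhatS_nonneg hP0 hQ y s, ?_⟩
  simp only [margYhat]
  rw [Finset.sum_comm, ← sum_margS hP1]
  exact Finset.sum_congr rfl fun s _ ↦ sum_jointYhatS hQ s

theorem condYhatS_eq_zero_of_margYhat_eq_zero (hP0 : ∀ x y s, 0 ≤ P x y s) (hQ : IsRule Q)
    {y : 𝒴} (hy : margYhat P Q y = 0) (s : 𝒮) : condYhatS P Q s y = 0 := by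
  rw [condYhatS, (Finset.sum_eq_zero_iff_of_nonneg fun s _ ↦ jointYhatS_nonneg hP0 hQ y s).1 hy s
    (Finset.mem_univ s), zero_div]

theorem MI_eq_sum_margS_mul_kl (hS : ∀ s, 0 < margS P s) :
    MI P Q = ∑ s, margS P s * kl (condYhatS P Q s) (margYhat P Q) := by
  rw [MI, Finset.sum_comm]
  refine Finset.sum_congr rfl fun s _ ↦ ?_
  rw [kl, Finset.mul_sum]
  refine Finset.sum_congr rfl fun y _ ↦ ?_
  rw [jointYhatS_eq_margS_mul_condYhatS hS, mul_comm (margYhat P Q y),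
    mul_div_mul_left _ _ (hS s).ne', mul_assoc]

theorem two_mul_sq_sum_margS_mul_TV_le_MI (hP0 : ∀ x y s, 0 ≤ P x y s)
    (hP1 : ∑ x, ∑ y, ∑ s, P x y s = 1) (hS : ∀ s, 0 < margS P s) (hQ : IsRule Q) :
    2 * (∑ s, margS P s * TV (condYhatS P Q s) (margYhat P Q)) ^ 2 ≤ MI P Q := by
  have hJensen : (∑ s, margS P s * TV (condYhatS P Q s) (margYhat P Q)) ^ 2 ≤
      (∑ s, margS P s * TV (condYhatS P Q s) (margYhat P Q) ^ 2) * ∑ s, margS P s :=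
    Finset.sum_sq_le_sum_mul_sum_of_sq_le_mul _
      (fun s _ ↦ mul_nonneg (hS s).le (sq_nonneg _)) (fun s _ ↦ (hS s).le)
      (fun s _ ↦ le_of_eq (by ring))
  have hPinsker : ∀ s, 2 * TV (condYhatS P Q s) (margYhat P Q) ^ 2 ≤
      kl (condYhatS P Q s) (margYhat P Q) := fun s ↦
    two_mul_sq_TV_le_kl (condYhatS_mem_stdSimplex hP0 hS hQ s)
      (margYhat_mem_stdSimplex hP0 hP1 hQ)
      (fun _ hy ↦ condYhatS_eq_zero_of_margYhat_eq_zero hP0 hQ hy s)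
  rw [sum_margS hP1, mul_one] at hJensen
  calc 2 * (∑ s, margS P s * TV (condYhatS P Q s) (margYhat P Q)) ^ 2
      ≤ 2 * ∑ s, margS P s * TV (condYhatS P Q s) (margYhat P Q) ^ 2 := by linarith
    _ = ∑ s, margS P s * (2 * TV (condYhatS P Q s) (margYhat P Q) ^ 2) := by
        rw [Finset.mul_sum]
        exact Finset.sum_congr rfl fun s _ ↦ by ring
    _ ≤ MI P Q := by
        rw [MI_eq_sum_margS_mul_kl hS]
        gcongr with s
        · exact (hS s).le
        · exact hPinsker s

theorem MI_eq_zero_of_jointYhatS_eq_mul (hP1 : ∑ x, ∑ y, ∑ s, P x y s = 1) {q : 𝒴 → ℝ}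
    (hq : ∀ y s, jointYhatS P Q y s = margS P s * q y) : MI P Q = 0 := by
  have hmarg : ∀ y, margYhat P Q y = q y := fun y ↦ by
    simp only [margYhat, hq, ← Finset.sum_mul, sum_margS hP1, one_mul]
  refine Finset.sum_eq_zero fun y _ ↦ Finset.sum_eq_zero fun s _ ↦ ?_
  rw [hq, hmarg, mul_comm (q y)]
  rcases eq_or_ne (margS P s * q y) 0 with h | h
  · rw [h, zero_mul]
  · rw [div_self h, log_one, mul_zero]

end Model

section Risk

variable {P : 𝒳 → 𝒴 → 𝒮 → ℝ} {Q : 𝒳 → 𝒮 → 𝒴 → ℝ}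

theorem risk_eq (hQ : IsRule Q) : risk P Q = ∑ s, ∑ y, ∑ x, P x y s * (1 - Q x s y) := by
  have h : ∀ x y s, ∑ yh, P x y s * Q x s yh * (if yh = y then (0 : ℝ) else 1) =
      P x y s * (1 - Q x s y) := fun x y s ↦ by
    simp [mul_ite, Finset.sum_ite, Finset.filter_ne', Finset.sum_erase_eq_sub, ← Finset.mul_sum,
      hQ.2 x s, mul_sub]
  simp only [risk, h]
  rw [Finset.sum_congr rfl fun x _ ↦ Finset.sum_comm, Finset.sum_comm]
  exact Finset.sum_congr rfl fun s _ ↦ Finset.sum_comm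

theorem sum_margS_mul_TV_le_risk (hP0 : ∀ x y s, 0 ≤ P x y s) (hS : ∀ s, 0 < margS P s)
    (hQ : IsRule Q) : ∑ s, margS P s * TV (condYhatS P Q s) (condYS P s) ≤ risk P Q := by
  rw [risk_eq hQ]
  refine Finset.sum_le_sum fun s _ ↦ ?_
  -- `(Y, Ŷ)` given `S = s` is a coupling of the label and prediction laws
  have hrow : ∀ y, ∑ yh, ∑ x, P x y s * Q x s yh = ∑ x, P x y s := fun y ↦ by
    rw [Finset.sum_comm]
    simp only [← Finset.mul_sum, hQ.2 _ s, mul_one]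
  have hcoupling := TV_le_sum_sub_diag (γ := fun y yh ↦ ∑ x, P x y s * Q x s yh)
    fun y yh ↦ Finset.sum_nonneg fun x _ ↦ mul_nonneg (hP0 x y s) (hQ.1 x s yh)
  simp only [hrow] at hcoupling
  calc margS P s * TV (condYhatS P Q s) (condYS P s)
      = TV (fun y ↦ ∑ x, P x y s) (fun yh ↦ ∑ y, ∑ x, P x y s * Q x s yh) := by
        rw [TV_comm, mul_TV (hS s).le]
        simp only [← sum_eq_margS_mul_condYS hS, ← jointYhatS_eq_margS_mul_condYhatS hS]
        exact congrArg _ (funext fun yh ↦ Finset.sum_comm)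
    _ ≤ ∑ y, ((∑ x, P x y s) - ∑ x, P x y s * Q x s y) := hcoupling
    _ = ∑ y, ∑ x, P x y s * (1 - Q x s y) := by
        simp only [mul_sub, mul_one, Finset.sum_sub_distrib]

theorem exists_isRule_MI_eq_zero_risk_le (hP0 : ∀ x y s, 0 ≤ P x y s)
    (hP1 : ∑ x, ∑ y, ∑ s, P x y s = 1) (hS : ∀ s, 0 < margS P s) {h : 𝒳 → 𝒮 → 𝒴}
    (hdet : ∀ x y s, y ≠ h x s → P x y s = 0) (s₀ : 𝒮) :
    ∃ Q, IsRule Q ∧ MI P Q = 0 ∧ risk P Q ≤ ∑ s, margS P s * TV (condYS P s) (condYS P s₀) := by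
  -- in each group, transport the label law to that of `s₀` by a maximal coupling
  choose K hK hKmap hKdiag using fun s ↦ exists_maximal_coupling_kernel
    (condYS_mem_stdSimplex hP0 hS s) (condYS_mem_stdSimplex hP0 hS s₀)
  have hrule : IsRule fun x s ↦ K s (h x s) :=
    ⟨fun x s ↦ (hK s (h x s)).1, fun x s ↦ (hK s (h x s)).2⟩
  refine ⟨_, hrule, MI_eq_zero_of_jointYhatS_eq_mul hP1 (q := condYS P s₀) fun yh s ↦ ?_, ?_⟩
  · calc jointYhatS P (fun x s ↦ K s (h x s)) yh s = ∑ y, ∑ x, P x y s * K s (h x s) yh :=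
          Finset.sum_comm
      _ = ∑ y, margS P s * (condYS P s y * K s y yh) := Finset.sum_congr rfl fun y _ ↦ by
          rw [sum_mul_apply_label_eq hdet (fun z ↦ K s z yh), sum_eq_margS_mul_condYS hS, mul_assoc]
      _ = margS P s * condYS P s₀ yh := by rw [← Finset.mul_sum, hKmap s yh]
  · rw [risk_eq hrule]
    refine Finset.sum_le_sum fun s _ ↦ ?_
    calc ∑ y, ∑ x, P x y s * (1 - K s (h x s) y)
        = margS P s * ∑ y, condYS P s y * (1 - K s y y) := by
          rw [Finset.mul_sum]
          refine Finset.sum_congr rfl fun y _ ↦ ?_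
          rw [sum_mul_apply_label_eq hdet (fun z ↦ 1 - K s z y), sum_eq_margS_mul_condYS hS,
            mul_assoc]
      _ ≤ margS P s * TV (condYS P s) (condYS P s₀) :=
          mul_le_mul_of_nonneg_left (hKdiag s) (hS s).le

end Risk

section Averages

variable {ι α : Type*} [Fintype ι] [Fintype α] {w : ι → ℝ}

theorem sum_mul_TV_le_add (hw : ∀ i, 0 ≤ w i) (hw1 : ∑ i, w i = 1) (a : ι → α → ℝ)
    (c d : α → ℝ) : ∑ i, w i * TV (a i) d ≤ ∑ i, w i * TV (a i) c + TV c d :=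
  calc ∑ i, w i * TV (a i) d ≤ ∑ i, (w i * TV (a i) c + w i * TV c d) := by
        refine Finset.sum_le_sum fun i _ ↦ ?_
        rw [← mul_add]
        exact mul_le_mul_of_nonneg_left (TV_triangle _ _ _) (hw i)
    _ = ∑ i, w i * TV (a i) c + TV c d := by
        rw [Finset.sum_add_distrib, ← Finset.sum_mul, hw1, one_mul]

theorem two_mul_sub_one_mul_TV_le (hw : ∀ i, 0 ≤ w i) (hw1 : ∑ i, w i = 1)
    {a b : ι → α → ℝ} {c : α → ℝ} {i₀ : ι}
    (h : ∑ i, w i * TV (a i) (b i) ≤ ∑ i, w i * TV (b i) (b i₀)) :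
    (2 * w i₀ - 1) * TV c (b i₀) ≤ ∑ i, w i * TV (a i) c := by
  classical
  set t := TV c (b i₀)
  have htri : ∀ i, TV (b i) (b i₀) + (if i = i₀ then 2 * t else 0) ≤
      TV (a i) (b i) + TV (a i) c + t := fun i ↦ by
    split_ifs with hi
    · subst hi
      linarith [TV_self (b i), TV_triangle c (a i) (b i), TV_comm c (a i)]
    · linarith [TV_triangle (b i) (a i) (b i₀), TV_triangle (a i) c (b i₀), TV_comm (b i) (a i)]
  have hsum := Finset.sum_le_sum fun i (_ : i ∈ Finset.univ) ↦
    mul_le_mul_of_nonneg_left (htri i) (hw i)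
  simp only [mul_add, mul_ite, mul_zero, Finset.sum_add_distrib, Finset.sum_ite_eq',
    Finset.mem_univ, if_true, ← Finset.sum_mul, hw1, one_mul] at hsum
  linarith

end Averages

/-- **Theorem 2 (mutual information case).** If `Y = h(X, S)` is deterministic,
`P_S(s_max) = 1/2 + δ` with `δ > 0`, and `Q` is an optimal randomized prediction rule among
those with `I(Ŷ; S) ≤ ε`, then
`E_{s∼P_S}[TV(P_{Ŷ|S=s}, P_{Y|S=s_max})] ≤ (1/2 + 1/(4δ)) √(2ε)`. -/
theorem mi_fair_optimal_inductive_bias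
    (P : 𝒳 → 𝒴 → 𝒮 → ℝ)
    (hP0 : ∀ x y s, 0 ≤ P x y s)
    (hP1 : ∑ x, ∑ y, ∑ s, P x y s = 1)
    (hS : ∀ s, 0 < margS P s)
    (h : 𝒳 → 𝒮 → 𝒴) (hdet : ∀ x y s, y ≠ h x s → P x y s = 0)
    (smax : 𝒮) (δ : ℝ) (hδ : 0 < δ) (hsmax : margS P smax = 1 / 2 + δ)
    (ε : ℝ)
    (Q : 𝒳 → 𝒮 → 𝒴 → ℝ) (hQ : IsRule Q)
    (hfair : MI P Q ≤ ε)
    (hopt : ∀ Q' : 𝒳 → 𝒮 → 𝒴 → ℝ, IsRule Q' → MI P Q' ≤ ε → risk P Q ≤ risk P Q') :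
    ∑ s, margS P s * TV (condYhatS P Q s) (condYS P smax)
      ≤ (1 / 2 + 1 / (4 * δ)) * Real.sqrt (2 * ε) := by
  have hw : ∀ s, 0 ≤ margS P s := fun s ↦ (hS s).le
  set A := ∑ s, margS P s * TV (condYhatS P Q s) (margYhat P Q)
  set t := TV (margYhat P Q) (condYS P smax)
  have hA : 2 * A ^ 2 ≤ ε := (two_mul_sq_sum_margS_mul_TV_le_MI hP0 hP1 hS hQ).trans hfair
  have hε : 0 ≤ ε := le_trans (by positivity) hA
  have h2A : 2 * A ≤ √(2 * ε) := Real.le_sqrt_of_sq_le (by linarith)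
  obtain ⟨Q', hQ', hMI', hrisk'⟩ := exists_isRule_MI_eq_zero_risk_le hP0 hP1 hS hdet smax
  have hrisk := (sum_margS_mul_TV_le_risk hP0 hS hQ).trans
    ((hopt Q' hQ' (hMI' ▸ hε)).trans hrisk')
  have ht : 2 * δ * t ≤ A := by
    have := two_mul_sub_one_mul_TV_le hw (sum_margS hP1) (c := margYhat P Q) hrisk
    rwa [hsmax, show 2 * (1 / 2 + δ) - 1 = 2 * δ by ring] at this
  calc ∑ s, margS P s * TV (condYhatS P Q s) (condYS P smax)
      ≤ A + t := sum_mul_TV_le_add hw (sum_margS hP1) _ _ _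
    _ ≤ (1 / 2 + 1 / (4 * δ)) * (2 * A) := by
        rw [show (1 / 2 + 1 / (4 * δ)) * (2 * A) = A + A / (2 * δ) by field_simp; ring]
        have := (le_div_iff₀ (by positivity : 0 < 2 * δ)).2 (by linarith : t * (2 * δ) ≤ A)
        linarith
    _ ≤ (1 / 2 + 1 / (4 * δ)) * √(2 * ε) := by gcongr
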